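/- arXiv:2005.03714 — 4 statements merged into one kernel-verified Lean document; each statement's English description precedes it below -/
import Mathlib

section
/- Let a, b, c, d, e be real numbers with a = (D-E)(1-B)^2, b = 2α(1-E)(A-B), c = -(D-E)(1+B)^2, e = -2α(1+E)(A-B), where -1 ≤ B < A ≤ 1, -1 ≤ E < D ≤ 1, and αE < 0. Then for every real σ ≤ -1/2, we have 2ac + d^2 + (b+e)cσ ≥ 2ac + d^2 - (1/2)(b+e)c = 2(D-E)(1+B)^2((D-E)(1-B)^2 - αE(A-B)) where d = 2(D-E)(1-B^2), and this quantity is nonnegative. -/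
theorem stmt_0_general (A B D E α σ a b c d e : ℝ)
    (hBA : B < A) (hED : E < D)
    (hαE : α * E < 0)
    (ha : a = (D - E) * (1 - B)^2)
    (hb : b = 2 * α * (1 - E) * (A - B))
    (hc : c = -(D - E) * (1 + B)^2)
    (hd : d = 2 * (D - E) * (1 - B^2))
    (he : e = -2 * α * (1 + E) * (A - B))
    (hσ : σ ≤ -(1/2)) :
    2*a*c + d^2 + (b + e)*c*σ ≥ 2*a*c + d^2 - (1/2)*(b + e)*c ∧
    2*a*c + d^2 - (1/2)*(b + e)*c
      = 2*(D - E)*(1 + B)^2*((D - E)*(1 - B)^2 - α*E*(A - B)) ∧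
    0 ≤ 2*(D - E)*(1 + B)^2*((D - E)*(1 - B)^2 - α*E*(A - B)) := by
  have hAB : 0 < A - B := sub_pos.2 hBA
  have hDE : 0 < D - E := sub_pos.2 hED
  have hαE_AB : α * E * (A - B) < 0 := mul_neg_of_neg_of_pos hαE hAB
  -- the coefficient of σ has the sign of αE, so the bound is attained at σ = -1/2
  have hcoeff : (b + e) * c ≤ 0 := by
    have hfactor : (b + e) * c = 4 * (α * E * (A - B)) * ((D - E) * (1 + B)^2) := by
      rw [hb, he, hc]; ring
    rw [hfactor]
    exact mul_nonpos_of_nonpos_of_nonneg (by linarith) (by positivity)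
  refine ⟨?_, by rw [ha, hb, hc, hd, he]; ring, ?_⟩
  · linarith [mul_le_mul_of_nonpos_left hσ hcoeff]
  · have hfactor_nonneg : 0 ≤ (D - E) * (1 - B)^2 - α * E * (A - B) := by
      have : 0 ≤ (D - E) * (1 - B)^2 := by positivity
      linarith
    positivity

/-- lower bound for `2ac + d² + (b+e)cσ` for `σ ≤ -1/2`, with the
closed form of the bound, and its nonnegativity. -/
theorem stmt_0 (A B D E α σ a b c d e : ℝ)
    (hB : -1 ≤ B) (hBA : B < A) (hA : A ≤ 1)
    (hE : -1 ≤ E) (hED : E < D) (hD : D ≤ 1)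
    (hαE : α * E < 0)
    (ha : a = (D - E) * (1 - B)^2)
    (hb : b = 2 * α * (1 - E) * (A - B))
    (hc : c = -(D - E) * (1 + B)^2)
    (hd : d = 2 * (D - E) * (1 - B^2))
    (he : e = -2 * α * (1 + E) * (A - B))
    (hσ : σ ≤ -(1/2)) :
    2*a*c + d^2 + (b + e)*c*σ ≥ 2*a*c + d^2 - (1/2)*(b + e)*c ∧
    2*a*c + d^2 - (1/2)*(b + e)*c
      = 2*(D - E)*(1 + B)^2*((D - E)*(1 - B)^2 - α*E*(A - B)) ∧
    0 ≤ 2*(D - E)*(1 + B)^2*((D - E)*(1 - B)^2 - α*E*(A - B)) :=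
  stmt_0_general A B D E α σ a b c d e hBA hED hαE ha hb hc hd he hσ
end

section
/- Let a = (D-E)(1-A)(1-B), b = 2α(1-E)(A-B), c = -(D-E)(1+A)(1+B), d = 2(D-E)(1-AB), e = -2α(1+E)(A-B), where -1 ≤ B < A ≤ 1, -1 ≤ E < D ≤ 1, and αE < 0. Then for every real σ ≤ -1/2, 2ac + d² + (b+e)cσ ≥ 2ac + d² - (1/2)(b+e)c = 2(D-E)((D-E)((1-AB)² + (A-B)²) - αE(A-B)(1+A)(1+B)) ≥ 0. -/
/-!
Put `P = (A - B)(D - E)(1 + A)(1 + B) ≥ 0`. Then `(b + e)c = 4αE·P ≤ 0`, so `σ ↦ (b + e)cσ` is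
antitone and `σ ≤ -1/2` gives the inequality. The closed form is a polynomial identity, and it
splits as `2(D - E)²((1 - AB)² + (A - B)²) - 2αE·P`, a sum of two nonnegative terms.
-/

lemma weight_nonneg {A B D E : ℝ} (hB : -1 ≤ B) (hBA : B < A) (hED : E < D) :
    0 ≤ (A - B) * (D - E) * (1 + A) * (1 + B) :=
  mul_nonneg (mul_nonneg (mul_nonneg (by linarith) (by linarith)) (by linarith)) (by linarith)

lemma closed_form_nonneg {A B D E α : ℝ} (hB : -1 ≤ B) (hBA : B < A) (hED : E < D)
    (hαE : α * E < 0) :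
    0 ≤ 2 * (D - E) * ((D - E) * ((1 - A * B) ^ 2 + (A - B) ^ 2)
      - α * E * (A - B) * (1 + A) * (1 + B)) := by
  have hsplit : 2 * (D - E) * ((D - E) * ((1 - A * B) ^ 2 + (A - B) ^ 2)
      - α * E * (A - B) * (1 + A) * (1 + B))
      = 2 * (D - E) ^ 2 * ((1 - A * B) ^ 2 + (A - B) ^ 2)
        + 2 * (-(α * E)) * ((A - B) * (D - E) * (1 + A) * (1 + B)) := by ring
  rw [hsplit]
  exact add_nonneg (by positivity)
    (mul_nonneg (by linarith) (weight_nonneg hB hBA hED))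

theorem stmt_5_general (A B D E α σ a b c d e : ℝ)
    (hB : -1 ≤ B) (hBA : B < A)
    (hED : E < D)
    (hαE : α * E < 0)
    (ha : a = (D - E) * (1 - A) * (1 - B))
    (hb : b = 2 * α * (1 - E) * (A - B))
    (hc : c = -(D - E) * (1 + A) * (1 + B))
    (hd : d = 2 * (D - E) * (1 - A*B))
    (he : e = -2 * α * (1 + E) * (A - B))
    (hσ : σ ≤ -(1/2)) :
    2*a*c + d^2 + (b + e)*c*σ ≥ 2*a*c + d^2 - (1/2)*(b + e)*c ∧
    2*a*c + d^2 - (1/2)*(b + e)*c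
      = 2*(D - E)*((D - E)*((1 - A*B)^2 + (A - B)^2)
          - α*E*(A - B)*(1 + A)*(1 + B)) ∧
    0 ≤ 2*(D - E)*((D - E)*((1 - A*B)^2 + (A - B)^2)
          - α*E*(A - B)*(1 + A)*(1 + B)) := by
  have hbec : (b + e) * c = 4 * (α * E) * ((A - B) * (D - E) * (1 + A) * (1 + B)) := by
    subst hb he hc; ring
  have hbec_nonpos : (b + e) * c ≤ 0 :=
    hbec ▸ mul_nonpos_of_nonpos_of_nonneg (by linarith) (weight_nonneg hB hBA hED)
  refine ⟨?_, by subst ha hb hc hd he; ring, closed_form_nonneg hB hBA hED hαE⟩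
  have := mul_le_mul_of_nonpos_left hσ hbec_nonpos
  linarith

/-- lower bound for `2ac + d² + (b+e)cσ` for `σ ≤ -1/2` with the
constants of Lemma 2.3, the closed form of the bound, and its nonnegativity. -/
theorem stmt_5 (A B D E α σ a b c d e : ℝ)
    (hB : -1 ≤ B) (hBA : B < A) (hA : A ≤ 1)
    (hE : -1 ≤ E) (hED : E < D) (hD : D ≤ 1)
    (hαE : α * E < 0)
    (ha : a = (D - E) * (1 - A) * (1 - B))
    (hb : b = 2 * α * (1 - E) * (A - B))
    (hc : c = -(D - E) * (1 + A) * (1 + B))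
    (hd : d = 2 * (D - E) * (1 - A*B))
    (he : e = -2 * α * (1 + E) * (A - B))
    (hσ : σ ≤ -(1/2)) :
    2*a*c + d^2 + (b + e)*c*σ ≥ 2*a*c + d^2 - (1/2)*(b + e)*c ∧
    2*a*c + d^2 - (1/2)*(b + e)*c
      = 2*(D - E)*((D - E)*((1 - A*B)^2 + (A - B)^2)
          - α*E*(A - B)*(1 + A)*(1 + B)) ∧
    0 ≤ 2*(D - E)*((D - E)*((1 - A*B)^2 + (A - B)^2)
          - α*E*(A - B)*(1 + A)*(1 + B)) :=
  stmt_5_general A B D E α σ a b c d e hB hBA hED hαE ha hb hc hd he hσ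
end

section
/- Let f be analytic on the open unit disc with f(0) = 0, f'(0) = 1, f nonvanishing on the punctured disc, and suppose |z f'(z)/f(z) · (1 + z f''(z)/f'(z) - z f'(z)/f(z))| < 1 - λ for all z in the disc, where 0 ≤ λ < 1. Then |z f'(z)/f(z) - 1| < 1 - λ throughout the disc, i.e., f ∈ S*(λ). -/
/-!
Put `p(z) = z f'(z)/f(z)`, analytic on the disc with `p(0) = 1`. Since
`z p'/p = 1 + z f''/f' - z f'/f`, the hypothesis says that `‖z p'(z)‖ ≤ 1 - λ`.
The Schwarz lemma applied to `z p'(z)`, which vanishes at `0`, gives `‖p'‖ ≤ 1 - λ`,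
and integrating from `0` to `z` yields `‖p(z) - 1‖ ≤ (1 - λ) ‖z‖ < 1 - λ`.
-/

/-- The open unit disc in `ℂ`. -/
def unitDisc : Set ℂ := Metric.ball 0 1

open Filter Metric Set Topology

theorem ContinuousOn.le_of_eventually_codiscreteWithin {X α : Type*} [TopologicalSpace X]
    [∀ x : X, (𝓝[≠] x).NeBot] [TopologicalSpace α] [Preorder α] [ClosedIicTopology α]
    {U : Set X} (hU : IsOpen U) {h : X → α} (hh : ContinuousOn h U) {M : α}
    (hM : ∀ᶠ x in codiscreteWithin U, h x ≤ M) {x : X} (hx : x ∈ U) : h x ≤ M := by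
  have hM' : ∀ᶠ y in 𝓝[≠] x, h y ≤ M := by
    filter_upwards [mem_codiscreteWithin_iff_forall_mem_nhdsNE.mp hM x hx,
      mem_nhdsWithin_of_mem_nhds (hU.mem_nhds hx)] with y hy hyU
    exact hy.resolve_right (not_not.mpr hyU)
  exact le_of_tendsto
    ((hh.continuousAt (hU.mem_nhds hx)).tendsto.mono_left nhdsWithin_le_nhds) hM'

theorem norm_deriv_le_div_of_norm_mul_deriv_le {q : ℂ → ℂ} {R M : ℝ}
    (hq : DifferentiableOn ℂ q (ball 0 R)) (hM : ∀ z ∈ ball 0 R, ‖z * deriv q z‖ ≤ M)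
    {z : ℂ} (hz : z ∈ ball 0 R) : ‖deriv q z‖ ≤ M / R := by
  set g : ℂ → ℂ := fun w => w * deriv q w
  have hq' : DifferentiableOn ℂ (deriv q) (ball 0 R) := hq.deriv isOpen_ball
  have hg : DifferentiableOn ℂ g (ball 0 R) := differentiableOn_id.mul hq'
  have hmaps : MapsTo g (ball 0 R) (closedBall (g 0) M) := fun w hw => by
    simpa [g] using hM w hw
  have hdslope : dslope g 0 z = deriv q z := by
    rcases eq_or_ne z 0 with rfl | hz0
    · rw [dslope_same]
      have hg0 : HasDerivAt g (1 * deriv q 0 + 0 * deriv (deriv q) 0) 0 :=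
        (hasDerivAt_id 0).mul (hq'.differentiableAt (isOpen_ball.mem_nhds hz)).hasDerivAt
      rw [hg0.deriv]
      ring
    · rw [dslope_of_ne _ hz0, slope_def_field]
      field_simp [g]
      ring
  simpa [hdslope] using Complex.norm_dslope_le_div_of_mapsTo_ball hg hmaps hz

theorem norm_sub_le_of_norm_mul_deriv_le {q : ℂ → ℂ} {R M : ℝ}
    (hq : DifferentiableOn ℂ q (ball 0 R)) (hM : ∀ z ∈ ball 0 R, ‖z * deriv q z‖ ≤ M)
    {z : ℂ} (hz : z ∈ ball 0 R) : ‖q z - q 0‖ ≤ M / R * ‖z‖ := by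
  have h0 : (0 : ℂ) ∈ ball 0 R := mem_ball_self (pos_of_mem_ball hz)
  simpa using (convex_ball (0 : ℂ) R).norm_image_sub_le_of_norm_deriv_le
    (fun w hw => hq.differentiableAt (isOpen_ball.mem_nhds hw))
    (fun w hw => norm_deriv_le_div_of_norm_mul_deriv_le hq hM hw) h0 hz

/-- `z f'(z) / f(z)` for `f 0 = 0`, with its removable singularity at `0` filled in through
`dslope f 0 z = f z / z`. -/
noncomputable def starlikeRatio (f : ℂ → ℂ) (z : ℂ) : ℂ := deriv f z / dslope f 0 z

section StarlikeRatio

variable {f : ℂ → ℂ}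

theorem starlikeRatio_of_ne (hf0 : f 0 = 0) {z : ℂ} (hz : z ≠ 0) :
    starlikeRatio f z = z * deriv f z / f z := by
  rw [starlikeRatio, dslope_of_ne _ hz, slope_def_field, hf0, sub_zero, sub_zero,
    div_div_eq_mul_div, mul_comm]

theorem starlikeRatio_zero (hf'0 : deriv f 0 ≠ 0) : starlikeRatio f 0 = 1 := by
  rw [starlikeRatio, dslope_same, div_self hf'0]

theorem differentiableOn_starlikeRatio {U : Set ℂ} (hU : IsOpen U) (h0 : 0 ∈ U)
    (hf : DifferentiableOn ℂ f U) (hf0 : f 0 = 0) (hf'0 : deriv f 0 ≠ 0)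
    (hfz : ∀ z ∈ U, z ≠ 0 → f z ≠ 0) :
    DifferentiableOn ℂ (starlikeRatio f) U := by
  refine (hf.deriv hU).div ((Complex.differentiableOn_dslope (hU.mem_nhds h0)).mpr hf)
    fun z hz => ?_
  rcases eq_or_ne z 0 with rfl | hz0
  · rwa [dslope_same]
  · rw [dslope_of_ne _ hz0, slope_def_field, hf0, sub_zero, sub_zero]
    exact div_ne_zero (hfz z hz hz0) hz0

theorem mul_deriv_starlikeRatio (hf0 : f 0 = 0) {z : ℂ} (hz : z ≠ 0)
    (hf : DifferentiableAt ℂ f z) (hf' : DifferentiableAt ℂ (deriv f) z) (hfz : f z ≠ 0)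
    (hf'z : deriv f z ≠ 0) :
    z * deriv (starlikeRatio f) z = z * deriv f z / f z
      * (1 + z * deriv (deriv f) z / deriv f z - z * deriv f z / f z) := by
  have heq : starlikeRatio f =ᶠ[𝓝 z] fun w => w * deriv f w / f w := by
    filter_upwards [eventually_ne_nhds hz] with w hw
    exact starlikeRatio_of_ne hf0 hw
  have hderiv : HasDerivAt (fun w => w * deriv f w / f w)
      (((1 * deriv f z + z * deriv (deriv f) z) * f z - z * deriv f z * deriv f z) / f z ^ 2) z :=
    ((hasDerivAt_id z).mul hf'.hasDerivAt).div hf.hasDerivAt hfz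
  rw [heq.deriv_eq, hderiv.deriv]
  field_simp

/-- Where `f'` vanishes the hypothesis carries the junk value `z f''/f' = 0` and says nothing;
those points are isolated, so the bound extends to them by continuity. -/
theorem norm_mul_deriv_starlikeRatio_le {U : Set ℂ} (hU : IsOpen U) (hUc : IsPreconnected U)
    (h0 : 0 ∈ U) (hf : DifferentiableOn ℂ f U) (hf0 : f 0 = 0) (hf'0 : deriv f 0 ≠ 0)
    (hfz : ∀ z ∈ U, z ≠ 0 → f z ≠ 0) {M : ℝ}
    (hM : ∀ z ∈ U, z ≠ 0 → ‖z * deriv f z / f z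
      * (1 + z * deriv (deriv f) z / deriv f z - z * deriv f z / f z)‖ ≤ M)
    {z : ℂ} (hz : z ∈ U) : ‖z * deriv (starlikeRatio f) z‖ ≤ M := by
  have hf' : DifferentiableOn ℂ (deriv f) U := hf.deriv hU
  have hp := differentiableOn_starlikeRatio hU h0 hf hf0 hf'0 hfz
  have hf'_ne : ∀ᶠ w in codiscreteWithin U, deriv f w ≠ 0 :=
    ((hf'.analyticOnNhd hU).eqOn_zero_or_eventually_ne_zero_of_preconnected hUc).resolve_left
      fun h => hf'0 (h h0)
  refine (continuous_norm.comp_continuousOn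
    (continuousOn_id.mul (hp.deriv hU).continuousOn)).le_of_eventually_codiscreteWithin hU ?_ hz
  filter_upwards [self_mem_codiscreteWithin U, compl_singleton_mem_codiscreteWithin 0, hf'_ne]
    with w hw hw0 hw'
  show ‖w * deriv (starlikeRatio f) w‖ ≤ M
  rw [mul_deriv_starlikeRatio hf0 hw0 (hf.differentiableAt (hU.mem_nhds hw))
    (hf'.differentiableAt (hU.mem_nhds hw)) (hfz w hw hw0) hw']
  exact hM w hw hw0

end StarlikeRatio

theorem stmt_8_general (l : ℝ) (f : ℂ → ℂ)
    (hl1 : l < 1)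
    (hf : AnalyticOn ℂ f unitDisc) (hf0 : f 0 = 0) (hf'0 : deriv f 0 = 1)
    (hfz : ∀ z ∈ unitDisc, z ≠ 0 → f z ≠ 0)
    (hbd : ∀ z ∈ unitDisc, z ≠ 0 →
      ‖(z * deriv f z / f z
        * (1 + z * deriv (deriv f) z / deriv f z - z * deriv f z / f z))‖
        < 1 - l) :
    ∀ z ∈ unitDisc, z ≠ 0 → ‖z * deriv f z / f z - 1‖ < 1 - l := by
  have hD : IsOpen unitDisc := Metric.isOpen_ball
  have h0D : (0 : ℂ) ∈ unitDisc := Metric.mem_ball_self one_pos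
  have hfd : DifferentiableOn ℂ f unitDisc := hf.differentiableOn
  have hf'0' : deriv f 0 ≠ 0 := by simp [hf'0]
  have hbound (z : ℂ) (hz : z ∈ unitDisc) : ‖z * deriv (starlikeRatio f) z‖ ≤ 1 - l :=
    norm_mul_deriv_starlikeRatio_le hD (convex_ball 0 1).isPreconnected h0D hfd hf0 hf'0' hfz
      (fun w hw hw0 => (hbd w hw hw0).le) hz
  intro z hz hz0
  have hsub := norm_sub_le_of_norm_mul_deriv_le
    (differentiableOn_starlikeRatio hD h0D hfd hf0 hf'0' hfz) hbound hz
  rw [starlikeRatio_of_ne hf0 hz0, starlikeRatio_zero hf'0', div_one] at hsub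
  exact hsub.trans_lt (mul_lt_of_lt_one_right (by linarith) (mem_ball_zero_iff.mp hz))

/-- Corollary 2.4: if
`|z f'(z)/f(z) · (1 + z f''(z)/f'(z) - z f'(z)/f(z))| < 1 - λ` on the punctured
disc, then `|z f'(z)/f(z) - 1| < 1 - λ`, i.e. `f ∈ S*(λ)`. -/
theorem stmt_8 (l : ℝ) (f : ℂ → ℂ)
    (hl0 : 0 ≤ l) (hl1 : l < 1)
    (hf : AnalyticOn ℂ f unitDisc) (hf0 : f 0 = 0) (hf'0 : deriv f 0 = 1)
    (hfz : ∀ z ∈ unitDisc, z ≠ 0 → f z ≠ 0)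
    (hbd : ∀ z ∈ unitDisc, z ≠ 0 →
      ‖(z * deriv f z / f z
        * (1 + z * deriv (deriv f) z / deriv f z - z * deriv f z / f z))‖
        < 1 - l) :
    ∀ z ∈ unitDisc, z ≠ 0 → ‖z * deriv f z / f z - 1‖ < 1 - l :=
  stmt_8_general l f hl1 hf hf0 hf'0 hfz hbd
end

section
/- Let 0 ≤ λ < 1 and set δ = λ/(1 + 3λ + λ²). If f is analytic on the unit disc with f(0)=0, f'(0)=1, f and f' nonvanishing on the punctured disc, and |1 + z f''(z)/f'(z) - z f'(z)/f(z)| < δ·|1 + z f''(z)/f'(z) + z f'(z)/f(z)| for all z in the disc, then |z f'(z)/f(z) - 1| < λ·|z f'(z)/f(z) + 1| throughout the disc, i.e., f ∈ S*[λ]. -/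
open Metric Set Filter Complex Topology

theorem exists_eq_zero_and_nonpos_on_closedBall {E : Type*} [NormedAddCommGroup E]
    [NormedSpace ℝ E] [ProperSpace E] {g : E → ℝ} {z : E}
    (hg : ContinuousOn g (closedBall 0 ‖z‖)) (h0 : g 0 < 0) (hz : 0 ≤ g z) :
    ∃ z₀, ‖z₀‖ ≤ ‖z‖ ∧ g z₀ = 0 ∧ ∀ w ∈ closedBall 0 ‖z₀‖, g w ≤ 0 := by
  have hK : IsCompact (closedBall 0 ‖z‖ ∩ g ⁻¹' Ici 0) :=
    (isCompact_closedBall 0 ‖z‖).of_isClosed_subset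
      (hg.preimage_isClosed_of_isClosed isClosed_closedBall isClosed_Ici) inter_subset_left
  obtain ⟨z₀, ⟨hz₀z, hz₀⟩, hmin⟩ :=
    hK.exists_isMinOn ⟨z, mem_closedBall_zero_iff.2 le_rfl, hz⟩ continuous_norm.continuousOn
  rw [mem_closedBall_zero_iff] at hz₀z
  have hneg : ∀ w ∈ ball 0 ‖z₀‖, g w < 0 := fun w hw => by
    rw [mem_ball_zero_iff] at hw
    by_contra! hgw
    exact (hmin ⟨mem_closedBall_zero_iff.2 (hw.le.trans hz₀z), hgw⟩).not_gt hw
  have hz₀0 : z₀ ≠ 0 := by rintro rfl; exact (h0.trans_le hz₀).false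
  have hnonpos : ∀ w ∈ closedBall 0 ‖z₀‖, g w ≤ 0 := by
    rw [← closure_ball 0 (norm_ne_zero_iff.2 hz₀0)]
    refine le_on_closure (fun w hw => (hneg w hw).le) (hg.mono ?_) continuousOn_const
    rw [closure_ball 0 (norm_ne_zero_iff.2 hz₀0)]
    exact closedBall_subset_closedBall hz₀z
  exact ⟨z₀, hz₀z, le_antisymm (hnonpos z₀ (mem_closedBall_zero_iff.2 le_rfl)) hz₀, hnonpos⟩

theorem im_deriv_eq_zero_and_one_le_re_deriv_of_norm_le_norm {φ : ℂ → ℂ}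
    (hφ : DifferentiableAt ℂ φ 1) (h1 : φ 1 = 1)
    (hle : ∀ s : ℂ, ‖s‖ ≤ 1 → ‖φ s‖ ≤ ‖s‖) :
    (deriv φ 1).im = 0 ∧ 1 ≤ (deriv φ 1).re := by
  have hd : HasDerivAt φ (deriv φ 1) 1 := hφ.hasDerivAt
  have hre_le : ∀ s : ℂ, ‖s‖ ≤ 1 → (φ s).re ≤ ‖s‖ := fun s hs =>
    (re_le_norm _).trans (hle s hs)
  constructor
  · have hrot : HasDerivAt (fun t : ℝ => (φ (exp (t * I))).re) (deriv φ 1 * I).re 0 := by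
      have h : HasDerivAt (fun s : ℂ => φ (exp (s * I))) (deriv φ 1 * (exp (0 * I) * I)) 0 := by
        refine HasDerivAt.comp (0 : ℂ) ?_ (((hasDerivAt_id 0).mul_const I).cexp.congr_deriv ?_)
        · simpa using hd
        · simp
      simpa using h.real_of_complex
    have hmax : IsLocalMax (fun t : ℝ => (φ (exp (t * I))).re) 0 :=
      Filter.Eventually.of_forall fun t => by
        simpa [h1, norm_exp_ofReal_mul_I] using hre_le _ (norm_exp_ofReal_mul_I t).le
    simpa using hmax.hasDerivAt_eq_zero hrot
  · have hrad : HasDerivAt (fun t : ℝ => (φ t).re - t) ((deriv φ 1).re - 1) 1 :=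
      (hd.real_of_complex (z := 1)).sub (hasDerivAt_id 1)
    have hmax : IsMaxOn (fun t : ℝ => (φ t).re - t) (Icc 0 1) 1 := fun t ht => by
      simpa [h1, abs_of_nonneg ht.1] using hre_le t (by simpa [abs_of_nonneg ht.1] using ht.2)
    have hcone : (0 - 1 : ℝ) ∈ posTangentConeAt (Icc 0 1) 1 :=
      sub_mem_posTangentConeAt_of_segment_subset (by rw [segment_symm, segment_eq_Icc zero_le_one])
    simpa using hmax.localize.hasFDerivWithinAt_nonpos hrad.hasFDerivAt.hasFDerivWithinAt hcone

-- Jack's lemma.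
theorem exists_one_le_mul_deriv_eq_of_isMaxOn_norm {W : ℂ → ℂ} {z₀ : ℂ}
    (hW : DifferentiableOn ℂ W (ball 0 ‖z₀‖)) (hWz₀ : DifferentiableAt ℂ W z₀) (h0 : W 0 = 0)
    (hW₀ : W z₀ ≠ 0) (hmax : IsMaxOn (‖W ·‖) (closedBall 0 ‖z₀‖) z₀) :
    ∃ m : ℝ, 1 ≤ m ∧ z₀ * deriv W z₀ = m * W z₀ := by
  have hz₀ : 0 < ‖z₀‖ := norm_pos_iff.2 fun h => hW₀ (h ▸ h0)
  set φ : ℂ → ℂ := fun s => W (s * z₀) / W z₀ with hφ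
  have hscale : ∀ s : ℂ, ‖s‖ ≤ 1 → s * z₀ ∈ closedBall 0 ‖z₀‖ := fun s hs => by
    simpa using mul_le_of_le_one_left (norm_nonneg z₀) hs
  have hφ_le_one : ∀ s : ℂ, ‖s‖ ≤ 1 → ‖φ s‖ ≤ 1 := fun s hs => by
    simpa [hφ, norm_div, div_le_one (norm_pos_iff.2 hW₀)] using hmax (hscale s hs)
  have hφ_le : ∀ s : ℂ, ‖s‖ ≤ 1 → ‖φ s‖ ≤ ‖s‖ := by
    intro s hs
    rcases hs.lt_or_eq with hs | hs
    · refine norm_le_norm_of_mapsTo_ball (fun w hw => ?_) (fun w hw => ?_) (by simp [hφ, h0]) hs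
      · have hwz : w * z₀ ∈ ball 0 ‖z₀‖ := by
          simpa [norm_mul] using mul_lt_of_lt_one_left hz₀ (mem_ball_zero_iff.1 hw)
        exact (((hW.differentiableAt (isOpen_ball.mem_nhds hwz)).comp w
          (differentiableAt_id.mul_const z₀)).div_const _).differentiableWithinAt
      · simpa using hφ_le_one w (mem_ball_zero_iff.1 hw).le
    · exact hs ▸ hφ_le_one s hs.le
  have hderiv : HasDerivAt φ (z₀ * deriv W z₀ / W z₀) 1 := by
    refine ((hWz₀.hasDerivAt.comp_of_eq 1 (hasDerivAt_mul_const z₀) (one_mul z₀).symm).div_const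
      (W z₀)).congr_deriv ?_
    ring
  obtain ⟨him, hre⟩ := im_deriv_eq_zero_and_one_le_re_deriv_of_norm_le_norm
    hderiv.differentiableAt (by simp [hφ, hW₀]) hφ_le
  have hreal : ((deriv φ 1).re : ℂ) = deriv φ 1 := Complex.ext (by simp) (by simp [him])
  exact ⟨(deriv φ 1).re, hre, by rw [hreal, hderiv.deriv, div_mul_cancel₀ _ hW₀]⟩

theorem exists_jack_point_of_le_norm_sub_one {p : ℂ → ℂ} {l R : ℝ} (hl : 0 < l)
    (hp : DifferentiableOn ℂ p (ball 0 R)) (hp0 : p 0 = 1) {z : ℂ} (hz : z ∈ ball 0 R)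
    (hpz : l * ‖p z + 1‖ ≤ ‖p z - 1‖) :
    ∃ z₀ ∈ ball 0 R, z₀ ≠ 0 ∧ ‖p z₀ - 1‖ = l * ‖p z₀ + 1‖ ∧
      ∃ m : ℝ, 1 ≤ m ∧ 2 * (z₀ * deriv p z₀) = m * (p z₀ - 1) * (p z₀ + 1) := by
  have hzR : closedBall (0 : ℂ) ‖z‖ ⊆ ball 0 R := closedBall_subset_ball (mem_ball_zero_iff.1 hz)
  have hpc : ContinuousOn p (closedBall 0 ‖z‖) := hp.continuousOn.mono hzR
  obtain ⟨z₀, hz₀z, hgz₀, hg⟩ := exists_eq_zero_and_nonpos_on_closedBall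
    (g := fun w => ‖p w - 1‖ - l * ‖p w + 1‖) (by fun_prop) (by norm_num [hp0, hl])
    (sub_nonneg.2 hpz)
  have hz₀R : closedBall (0 : ℂ) ‖z₀‖ ⊆ ball 0 R := (closedBall_subset_closedBall hz₀z).trans hzR
  have hbdry : ‖p z₀ - 1‖ = l * ‖p z₀ + 1‖ := sub_eq_zero.1 hgz₀
  have hz₀ : z₀ ≠ 0 := by rintro rfl; norm_num [hp0, hl.ne'] at hbdry
  have hne : ∀ w ∈ closedBall 0 ‖z₀‖, p w + 1 ≠ 0 := fun w hw h => by
    have := hg w hw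
    norm_num [h, show p w - 1 = -2 by linear_combination h] at this
  set W : ℂ → ℂ := fun w => (p w - 1) / (p w + 1) with hW
  have hWd : ∀ w ∈ closedBall 0 ‖z₀‖, HasDerivAt W (2 * deriv p w / (p w + 1) ^ 2) w := by
    intro w hw
    have hpw := (hp.differentiableAt (isOpen_ball.mem_nhds (hz₀R hw))).hasDerivAt
    exact ((hpw.sub_const 1).div (hpw.add_const 1) (hne w hw)).congr_deriv (by ring)
  have hWle : ∀ w ∈ closedBall 0 ‖z₀‖, ‖W w‖ ≤ l := fun w hw => by
    rw [hW, norm_div, div_le_iff₀ (norm_pos_iff.2 (hne w hw))]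
    exact sub_nonpos.1 (hg w hw)
  have hz₀mem : z₀ ∈ closedBall 0 ‖z₀‖ := mem_closedBall_zero_iff.2 le_rfl
  have hpz₀ : p z₀ + 1 ≠ 0 := hne z₀ hz₀mem
  have hWz₀ : ‖W z₀‖ = l := by
    rw [hW, norm_div, hbdry, mul_div_cancel_right₀ _ (norm_ne_zero_iff.2 hpz₀)]
  obtain ⟨m, hm, hjack⟩ := exists_one_le_mul_deriv_eq_of_isMaxOn_norm (W := W)
    (fun w hw => (hWd w (ball_subset_closedBall hw)).differentiableAt.differentiableWithinAt)
    (hWd z₀ hz₀mem).differentiableAt (by simp [hW, hp0])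
    (norm_ne_zero_iff.1 (hWz₀ ▸ hl.ne')) (fun w hw => (hWle w hw).trans hWz₀.ge)
  refine ⟨z₀, hz₀R hz₀mem, hz₀, hbdry, m, hm, ?_⟩
  rw [(hWd z₀ hz₀mem).deriv, hW] at hjack
  field_simp at hjack
  linear_combination hjack

theorem div_mul_norm_add_le_norm {P A : ℂ} {l m : ℝ} (hl : 0 ≤ l) (hm : 1 ≤ m)
    (hP : ‖P - 1‖ = l * ‖P + 1‖) (hA : 2 * P * A = m * (P - 1) * (P + 1)) :
    l / (1 + 3 * l + l ^ 2) * ‖A + 2 * P‖ ≤ ‖A‖ := by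
  have hPA : 2 * ‖P‖ * ‖A‖ = m * (l * ‖P + 1‖) * ‖P + 1‖ := by
    simpa [norm_mul, hP, abs_of_nonneg (zero_le_one.trans hm)] using congrArg norm hA
  have hP2 : 2 * ‖P‖ ≤ (1 + l) * ‖P + 1‖ := calc
    2 * ‖P‖ = ‖(P + 1) + (P - 1)‖ := by
      rw [show P + 1 + (P - 1) = 2 * P by ring, norm_mul]; norm_num
    _ ≤ ‖P + 1‖ + ‖P - 1‖ := norm_add_le _ _
    _ = (1 + l) * ‖P + 1‖ := by rw [hP]; ring
  have hkey : 2 * l * ‖P‖ ≤ (1 + l) ^ 2 * ‖A‖ := by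
    rcases (norm_nonneg P).eq_or_lt with hP0 | hP0
    · rw [← hP0, mul_zero]; positivity
    refine le_of_mul_le_mul_left ?_ (by positivity : 0 < 2 * ‖P‖)
    nlinarith [mul_le_mul_of_nonneg_left (pow_le_pow_left₀ (by positivity) hP2 2) hl,
      mul_le_mul_of_nonneg_right hm (by positivity : 0 ≤ l * (1 + l) ^ 2 * ‖P + 1‖ ^ 2)]
  have hsum : ‖A + 2 * P‖ ≤ ‖A‖ + 2 * ‖P‖ := by
    simpa [norm_mul] using norm_add_le A (2 * P)
  rw [div_mul_eq_mul_div, div_le_iff₀ (by positivity)]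
  nlinarith [mul_le_mul_of_nonneg_left hsum hl]

noncomputable def starlikeQuotient (f : ℂ → ℂ) (z : ℂ) : ℂ :=
  if z = 0 then 1 else z * deriv f z / f z

theorem starlikeQuotient_eventuallyEq {f : ℂ → ℂ} {z : ℂ} (hz : z ≠ 0) :
    starlikeQuotient f =ᶠ[𝓝 z] fun w => w * deriv f w / f w := by
  filter_upwards [isOpen_ne.mem_nhds hz] with w hw using if_neg hw

theorem tendsto_starlikeQuotient {f : ℂ → ℂ} (hf : DifferentiableAt ℂ f 0)
    (hf' : ContinuousAt (deriv f) 0) (hf0 : f 0 = 0) (hf'0 : deriv f 0 ≠ 0) :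
    Tendsto (starlikeQuotient f) (𝓝[≠] 0) (𝓝 1) := by
  have hslope : Tendsto (fun w => f w / w) (𝓝[≠] 0) (𝓝 (deriv f 0)) :=
    (hasDerivAt_iff_tendsto_slope.1 hf.hasDerivAt).congr fun w => by simp [slope_def_field, hf0]
  have h := (hf'.tendsto.mono_left nhdsWithin_le_nhds).div hslope hf'0
  rw [div_self hf'0] at h
  refine h.congr' ?_
  filter_upwards [self_mem_nhdsWithin] with w (hw : w ≠ 0)
  rw [Pi.div_apply, starlikeQuotient, if_neg hw, div_div_eq_mul_div, mul_comm]

theorem differentiableOn_starlikeQuotient {f : ℂ → ℂ} {U : Set ℂ} (hU : IsOpen U) (h0 : 0 ∈ U)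
    (hf : DifferentiableOn ℂ f U) (hf0 : f 0 = 0) (hf'0 : deriv f 0 ≠ 0)
    (hfz : ∀ z ∈ U, z ≠ 0 → f z ≠ 0) : DifferentiableOn ℂ (starlikeQuotient f) U := by
  have hf' : DifferentiableOn ℂ (deriv f) U := hf.deriv hU
  rw [← differentiableOn_compl_singleton_and_continuousAt_iff (hU.mem_nhds h0)]
  constructor
  · rintro z ⟨hz, hz0 : z ≠ 0⟩
    have hU := hU.mem_nhds hz
    exact (((differentiableAt_id.mul (hf'.differentiableAt hU)).div (hf.differentiableAt hU)
      (hfz z hz hz0)).congr_of_eventuallyEq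
        (starlikeQuotient_eventuallyEq hz0)).differentiableWithinAt
  · rw [← continuousWithinAt_compl_self, ContinuousWithinAt, starlikeQuotient, if_pos rfl]
    exact tendsto_starlikeQuotient (hf.differentiableAt (hU.mem_nhds h0))
      (hf'.differentiableAt (hU.mem_nhds h0)).continuousAt hf0 hf'0

theorem mul_deriv_starlikeQuotient {f : ℂ → ℂ} {z : ℂ} (hz : z ≠ 0) (hf : DifferentiableAt ℂ f z)
    (hf' : DifferentiableAt ℂ (deriv f) z) (hfz : f z ≠ 0) (hf'z : deriv f z ≠ 0) :
    z * deriv (starlikeQuotient f) z =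
      starlikeQuotient f z * (1 + z * deriv (deriv f) z / deriv f z - z * deriv f z / f z) := by
  rw [(starlikeQuotient_eventuallyEq hz).deriv_eq, (starlikeQuotient_eventuallyEq hz).eq_of_nhds,
    (((hasDerivAt_id' z).fun_mul hf'.hasDerivAt).fun_div hf.hasDerivAt hfz).deriv]
  field_simp

theorem stmt_12_general (l δ : ℝ) (f : ℂ → ℂ)
    (hl0 : 0 ≤ l) (hδ : δ = l / (1 + 3 * l + l^2))
    (hf : AnalyticOn ℂ f unitDisc) (hf0 : f 0 = 0) (hf'0 : deriv f 0 = 1)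
    (hfz : ∀ z ∈ unitDisc, z ≠ 0 → f z ≠ 0)
    (hf'z : ∀ z ∈ unitDisc, z ≠ 0 → deriv f z ≠ 0)
    (hbd : ∀ z ∈ unitDisc, z ≠ 0 →
      ‖1 + z * deriv (deriv f) z / deriv f z - z * deriv f z / f z‖
        < δ * ‖1 + z * deriv (deriv f) z / deriv f z + z * deriv f z / f z‖) :
    ∀ z ∈ unitDisc, z ≠ 0 →
      ‖z * deriv f z / f z - 1‖ < l * ‖z * deriv f z / f z + 1‖ := by
  intro z hz hz0
  rcases hl0.eq_or_lt with rfl | hl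
  · have := hbd z hz hz0
    simp only [hδ, zero_div, zero_mul] at this
    exact absurd this (norm_nonneg _).not_gt
  have hfd : DifferentiableOn ℂ f unitDisc := hf.differentiableOn
  have hp := differentiableOn_starlikeQuotient isOpen_ball (mem_ball_self one_pos) hfd hf0
    (hf'0 ▸ one_ne_zero) hfz
  rw [← show starlikeQuotient f z = z * deriv f z / f z from if_neg hz0]
  by_contra! hpz
  obtain ⟨z₀, hz₀, hz₀0, hbdry, m, hm, hjack⟩ :=
    exists_jack_point_of_le_norm_sub_one hl hp (if_pos rfl) hz hpz
  set P := starlikeQuotient f z₀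
  set A := 1 + z₀ * deriv (deriv f) z₀ / deriv f z₀ - z₀ * deriv f z₀ / f z₀
  have hPA : z₀ * deriv (starlikeQuotient f) z₀ = P * A :=
    mul_deriv_starlikeQuotient hz₀0 (hfd.differentiableAt (isOpen_ball.mem_nhds hz₀))
      ((hfd.deriv isOpen_ball).differentiableAt (isOpen_ball.mem_nhds hz₀)) (hfz z₀ hz₀ hz₀0)
      (hf'z z₀ hz₀ hz₀0)
  have hsum : 1 + z₀ * deriv (deriv f) z₀ / deriv f z₀ + z₀ * deriv f z₀ / f z₀ = A + 2 * P := by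
    simp only [P, A, starlikeQuotient, if_neg hz₀0]; ring
  have := hbd z₀ hz₀ hz₀0
  rw [hsum, hδ] at this
  exact (div_mul_norm_add_le_norm hl0 hm hbdry (by rw [mul_assoc, ← hPA, hjack])).not_gt this

/-- Corollary 2.5, case `n = 1`, `μ = A - B`: if
`|1 + z f''/f' - z f'/f| < δ |1 + z f''/f' + z f'/f|` with `δ = λ/(1+3λ+λ²)`,
then `|z f'/f - 1| < λ |z f'/f + 1|`, i.e. `f ∈ S*[λ]`. -/
theorem stmt_12 (l δ : ℝ) (f : ℂ → ℂ)
    (hl0 : 0 ≤ l) (hl1 : l < 1) (hδ : δ = l / (1 + 3 * l + l^2))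
    (hf : AnalyticOn ℂ f unitDisc) (hf0 : f 0 = 0) (hf'0 : deriv f 0 = 1)
    (hfz : ∀ z ∈ unitDisc, z ≠ 0 → f z ≠ 0)
    (hf'z : ∀ z ∈ unitDisc, z ≠ 0 → deriv f z ≠ 0)
    (hbd : ∀ z ∈ unitDisc, z ≠ 0 →
      ‖1 + z * deriv (deriv f) z / deriv f z - z * deriv f z / f z‖
        < δ * ‖1 + z * deriv (deriv f) z / deriv f z + z * deriv f z / f z‖) :
    ∀ z ∈ unitDisc, z ≠ 0 →
      ‖z * deriv f z / f z - 1‖ < l * ‖z * deriv f z / f z + 1‖ :=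
  stmt_12_general l δ f hl0 hδ hf hf0 hf'0 hfz hf'z hbd
end
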